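/- arXiv:1404.3555 — 2 statements merged into one kernel-verified Lean document; each statement's English description precedes it below -/
import Mathlib

section
/- Let (Ω, ℱ, (ℱ_s), ℙ) be a filtered probability space carrying ℝ^k-valued adapted processes (F_s) and (ℓ_s) and a real adapted process (y_s) satisfying Assumption 1 with functions 𝒜, ℬ_i (i = 1,…,p), 𝒞_j (j = 1,…,q). Fix ν₁ ∈ ℝ^k, ν₂ ∈ ℝ, z ∈ ℝ and integers t < T, and let M_{s,s+1} denote the stochastic discount factor. Define backward sequences by A*_T = 0, B*_{T,i} = 0, C*_{T,j} = 0 and, for s = T−1,…,t: A*_s = A*_{s+1} + 𝒜(z−ν₂, B*_{s+1,1}−ν₁, C*_{s+1,1}) − 𝒜(−ν₂, −ν₁, 0); B*_{s,i} = B*_{s+1,i+1} + ℬ_i(z−ν₂, B*_{s+1,1}−ν₁, C*_{s+1,1}) − ℬ_i(−ν₂, −ν₁, 0) for 1 ≤ i ≤ p−1 and B*_{s,p} = ℬ_p(z−ν₂, B*_{s+1,1}−ν₁, C*_{s+1,1}) − ℬ_p(−ν₂, −ν₁, 0); C*_{s,j} = C*_{s+1,j+1} + 𝒞_j(z−ν₂,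 B*_{s+1,1}−ν₁, C*_{s+1,1}) − 𝒞_j(−ν₂, −ν₁, 0) for 1 ≤ j ≤ q−1 and C*_{s,q} = 𝒞_q(z−ν₂, B*_{s+1,1}−ν₁, C*_{s+1,1}) − 𝒞_q(−ν₂, −ν₁, 0). Then 𝔼[M_{t,t+1} ⋯ M_{T−1,T} exp(z (y_{t+1} + ⋯ + y_T)) | ℱ_t] = exp(A*_t + ∑_{i=1}^p B*_{t,i}·F_{t+1−i} + ∑_{j=1}^q C*_{t,j}·ℓ_{t+1−j}) almost surely. -/
/-!
Write `M_{s,s+1} exp (z y_{s+1}) = exp X_s`, where `X_s` is an affine form in the state at time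
`s + 1` minus the `ℱ_s`-measurable log-normaliser of the discount factor. By the tower property
the claim reduces to the one-step identity `𝔼[exp (X_s + Φ_{s+1}) | ℱ_s] = exp Φ_s` for the
starred affine forms `Φ_s`. Shifting the lags of `Φ_{s+1}` by one splits `X_s + Φ_{s+1}` into an
`ℱ_s`-measurable part and a fresh affine form in the time-`s + 1` state; Assumption 1 evaluates the
conditional expectation of the latter, and the starred recursion is exactly the resulting
bookkeeping. All integrability comes from the fact that affine forms in the state have a finite
moment generating function, and such forms are closed under sums.
-/

open MeasureTheory ProbabilityTheory Real

/-- Scalar product in `ℝ^k`. -/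
def dotk {k : ℕ} (a b : Fin k → ℝ) : ℝ := ∑ i, a i * b i

open Finset Filter

section Lags

variable {Ω : Type*} {k p q : ℕ}

lemma dotk_eq_dotProduct (a b : Fin k → ℝ) : dotk a b = a ⬝ᵥ b := rfl

def shiftLag {V : Type*} [Zero V] (b : Fin p → V) : Fin p → V :=
  fun i => if h : (i : ℕ) + 1 < p then b ⟨i + 1, h⟩ else 0

lemma sum_eq_add_sum_shiftLag {M : Type*} [AddCommMonoid M] (hp : 0 < p) (f : Fin p → M) :
    ∑ i, f i = f ⟨0, hp⟩ + ∑ i, shiftLag f i := by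
  obtain ⟨n, rfl⟩ : ∃ n, p = n + 1 := ⟨p - 1, by omega⟩
  rw [Fin.sum_univ_succ, Fin.sum_univ_castSucc (f := shiftLag f)]
  simp [shiftLag, Fin.succ]

/-- The lag `i : Fin p` is the paper's lag `i + 1`. -/
def lagAffine (F L : ℤ → Ω → Fin k → ℝ) (s : ℤ) (a : ℝ) (b : Fin p → Fin k → ℝ)
    (c : Fin q → Fin k → ℝ) (ω : Ω) : ℝ :=
  a + ∑ i, dotk (b i) (F (s - (i : ℕ)) ω) + ∑ j, dotk (c j) (L (s - (j : ℕ)) ω)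

def stateForm (y : ℤ → Ω → ℝ) (F L : ℤ → Ω → Fin k → ℝ) (s : ℤ) (z : ℝ) (b c : Fin k → ℝ)
    (ω : Ω) : ℝ :=
  z * y s ω + dotk b (F s ω) + dotk c (L s ω)

variable {F L : ℤ → Ω → Fin k → ℝ}

lemma lagAffine_zero (s : ℤ) : lagAffine (p := p) (q := q) F L s 0 0 0 = 0 := by
  ext ω
  simp [lagAffine, dotk_eq_dotProduct]

lemma lagAffine_sub (s : ℤ) (a a' : ℝ) (b b' : Fin p → Fin k → ℝ) (c c' : Fin q → Fin k → ℝ) :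
    lagAffine F L s (a - a') (b - b') (c - c')
      = lagAffine F L s a b c - lagAffine F L s a' b' c' := by
  ext ω
  simp only [lagAffine, dotk_eq_dotProduct, Pi.sub_apply, sub_dotProduct, sum_sub_distrib]
  ring

lemma sum_dotk_lag_succ (G : ℤ → Ω → Fin k → ℝ) (hp : 0 < p) (d : Fin p → Fin k → ℝ) (s : ℤ)
    (ω : Ω) :
    ∑ i : Fin p, dotk (d i) (G (s + 1 - (i : ℕ)) ω)
      = dotk (d ⟨0, hp⟩) (G (s + 1) ω) + ∑ i, dotk (shiftLag d i) (G (s - (i : ℕ)) ω) := by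
  rw [sum_eq_add_sum_shiftLag hp]
  refine congrArg₂ _ (by simp) (sum_congr rfl fun i _ => ?_)
  unfold shiftLag
  split_ifs
  · push_cast
    ring_nf
  · simp [dotk_eq_dotProduct]

lemma lagAffine_succ (hp : 0 < p) (hq : 0 < q) (s : ℤ) (a : ℝ) (b : Fin p → Fin k → ℝ)
    (c : Fin q → Fin k → ℝ) (ω : Ω) :
    lagAffine F L (s + 1) a b c ω = lagAffine F L s a (shiftLag b) (shiftLag c) ω
      + dotk (b ⟨0, hp⟩) (F (s + 1) ω) + dotk (c ⟨0, hq⟩) (L (s + 1) ω) := by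
  simp only [lagAffine, sum_dotk_lag_succ _ hp, sum_dotk_lag_succ _ hq]
  ring

lemma lagAffine_eq_add_sum_stateForm (y : ℤ → Ω → ℝ) (s : ℤ) (a : ℝ) (b : Fin p → Fin k → ℝ)
    (c : Fin q → Fin k → ℝ) :
    lagAffine F L s a b c = (fun _ => a) + ∑ i : Fin p, stateForm y F L (s - (i : ℕ)) 0 (b i) 0
      + ∑ j : Fin q, stateForm y F L (s - (j : ℕ)) 0 0 (c j) := by
  ext ω
  simp [lagAffine, stateForm, dotk_eq_dotProduct]

lemma mul_stateForm (y : ℤ → Ω → ℝ) (s : ℤ) (t z : ℝ) (b c : Fin k → ℝ) (ω : Ω) :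
    t * stateForm y F L s z b c ω = stateForm y F L s (t * z) (t • b) (t • c) ω := by
  simp only [stateForm, dotk_eq_dotProduct, smul_dotProduct, smul_eq_mul]
  ring

end Lags

section ExpMoments

variable {Ω : Type*} {m0 : MeasurableSpace Ω} {μ : Measure Ω} {X Y : Ω → ℝ}

lemma integrable_exp_mul_of_integrableExpSet_eq_univ (hX : integrableExpSet X μ = Set.univ)
    (t : ℝ) : Integrable (fun ω => exp (t * X ω)) μ := by
  have ht : t ∈ integrableExpSet X μ := hX ▸ Set.mem_univ t
  exact ht

lemma integrableExpSet_const_eq_univ [IsFiniteMeasure μ] (a : ℝ) :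
    integrableExpSet (fun _ => a) μ = Set.univ :=
  Set.eq_univ_of_forall fun _ => integrable_const _

lemma integrableExpSet_add_eq_univ (hX : integrableExpSet X μ = Set.univ)
    (hY : integrableExpSet Y μ = Set.univ) : integrableExpSet (X + Y) μ = Set.univ := by
  refine Set.eq_univ_of_forall fun t => ?_
  have hXt := integrable_exp_mul_of_integrableExpSet_eq_univ hX
  have hYt := integrable_exp_mul_of_integrableExpSet_eq_univ hY
  -- AM-GM: `exp (t (X + Y)) ≤ (exp (2 t X) + exp (2 t Y)) / 2`
  refine (((hXt (2 * t)).add (hYt (2 * t))).div_const 2).mono'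
    (((hXt t).aestronglyMeasurable.mul (hYt t).aestronglyMeasurable).congr
      (.of_forall fun ω => by simp [mul_add, exp_add])) (.of_forall fun ω => ?_)
  have hsq : ∀ x : ℝ, exp (2 * t * x) = exp (t * x) ^ 2 := fun x => by
    rw [sq, ← exp_add]; ring_nf
  simp only [Pi.add_apply, mul_add, exp_add, hsq, norm_mul, norm_eq_abs, abs_exp]
  linarith [two_mul_le_add_sq (exp (t * X ω)) (exp (t * Y ω))]

lemma integrableExpSet_neg_eq_univ (hX : integrableExpSet X μ = Set.univ) :
    integrableExpSet (-X) μ = Set.univ :=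
  Set.eq_univ_of_forall fun t => by
    simpa [integrableExpSet, neg_mul_comm] using
      integrable_exp_mul_of_integrableExpSet_eq_univ hX (-t)

lemma integrableExpSet_sub_eq_univ (hX : integrableExpSet X μ = Set.univ)
    (hY : integrableExpSet Y μ = Set.univ) : integrableExpSet (X - Y) μ = Set.univ :=
  sub_eq_add_neg X Y ▸ integrableExpSet_add_eq_univ hX (integrableExpSet_neg_eq_univ hY)

lemma integrableExpSet_sum_eq_univ [IsFiniteMeasure μ] {ι : Type*} (s : Finset ι)
    {X : ι → Ω → ℝ} (hX : ∀ i ∈ s, integrableExpSet (X i) μ = Set.univ) :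
    integrableExpSet (∑ i ∈ s, X i) μ = Set.univ := by
  classical
  induction s using Finset.induction_on with
  | empty => exact integrableExpSet_const_eq_univ 0
  | insert a s ha ih =>
    rw [sum_insert ha]
    exact integrableExpSet_add_eq_univ (hX a (mem_insert_self a s))
      (ih fun i hi => hX i (mem_insert_of_mem hi))

end ExpMoments

section CondExp

variable {Ω : Type*} {m0 : MeasurableSpace Ω} {μ : Measure Ω}

lemma condExp_mul_ae_eq_of_condExp_ae_eq {m m' : MeasurableSpace Ω} (hm : m ≤ m')
    (hm' : m' ≤ m0) [SigmaFinite (μ.trim hm')] {f g h : Ω → ℝ} (hf : StronglyMeasurable[m'] f)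
    (hfg : Integrable (f * g) μ) (hg : Integrable g μ) (hgh : μ[g|m'] =ᵐ[μ] h) :
    μ[f * g|m] =ᵐ[μ] μ[f * h|m] :=
  (condExp_condExp_of_le hm hm').symm.trans <| condExp_congr_ae <|
    (condExp_mul_of_stronglyMeasurable_left hf hfg hg).trans (EventuallyEq.rfl.mul hgh)

lemma condExp_exp_sum_Ico_of_step [IsFiniteMeasure μ] {ℱ : Filtration ℤ m0}
    {X Φ : ℤ → Ω → ℝ} {t T : ℤ} (htT : t ≤ T)
    (hX : ∀ s, StronglyMeasurable[ℱ (s + 1)] (X s))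
    (hint : ∀ s, Integrable (fun ω => exp (∑ u ∈ Ico s T, X u ω)) μ) (hΦ : Φ T = 0)
    (hstep : ∀ s, t ≤ s → s < T →
      μ[fun ω => exp (X s ω + Φ (s + 1) ω)|ℱ s] =ᵐ[μ] fun ω => exp (Φ s ω)) :
    μ[fun ω => exp (∑ u ∈ Ico t T, X u ω)|ℱ t] =ᵐ[μ] fun ω => exp (Φ t ω) := by
  obtain ⟨d, hd⟩ : ∃ d : ℕ, T = t + d := ⟨(T - t).toNat, by omega⟩
  induction d generalizing t with
  | zero =>
    obtain rfl : T = t := by simpa using hd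
    simp [hΦ, condExp_const (ℱ.le T)]
  | succ d ih =>
    have htT : t < T := by omega
    have hsplit : (fun ω => exp (∑ u ∈ Ico t T, X u ω))
        = (fun ω => exp (X t ω)) * fun ω => exp (∑ u ∈ Ico (t + 1) T, X u ω) := by
      ext ω
      rw [← insert_Ico_add_one_left_eq_Ico htT, sum_insert (by simp), exp_add, Pi.mul_apply]
    calc μ[fun ω => exp (∑ u ∈ Ico t T, X u ω)|ℱ t]
        = μ[(fun ω => exp (X t ω)) * fun ω => exp (∑ u ∈ Ico (t + 1) T, X u ω)|ℱ t] := by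
          rw [hsplit]
      _ =ᵐ[μ] μ[(fun ω => exp (X t ω)) * fun ω => exp (Φ (t + 1) ω)|ℱ t] :=
          condExp_mul_ae_eq_of_condExp_ae_eq (ℱ.mono (by omega)) (ℱ.le (t + 1))
            (continuous_exp.comp_stronglyMeasurable (hX t)) (hsplit ▸ hint t) (hint (t + 1))
            (ih (by omega) (fun s hs hsT => hstep s (by omega) hsT) (by omega))
      _ = μ[fun ω => exp (X t ω + Φ (t + 1) ω)|ℱ t] := by simp only [exp_add]; rfl
      _ =ᵐ[μ] fun ω => exp (Φ t ω) := hstep t le_rfl htT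

end CondExp

section Model

variable {Ω : Type*} {m0 : MeasurableSpace Ω} {k p q : ℕ}

/-- Assumption 1, for adapted processes. -/
structure IsExpAffine (μ : Measure Ω) (ℱ : Filtration ℤ m0) (F L : ℤ → Ω → Fin k → ℝ)
    (y : ℤ → Ω → ℝ) (𝒜 : ℝ → (Fin k → ℝ) → (Fin k → ℝ) → ℝ)
    (ℬ : ℝ → (Fin k → ℝ) → (Fin k → ℝ) → Fin p → Fin k → ℝ)
    (𝒞 : ℝ → (Fin k → ℝ) → (Fin k → ℝ) → Fin q → Fin k → ℝ) : Prop where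
  adapted_F : StronglyAdapted ℱ F
  adapted_L : StronglyAdapted ℱ L
  adapted_y : StronglyAdapted ℱ y
  integrable_exp (s : ℤ) (z : ℝ) (b c : Fin k → ℝ) :
    Integrable (fun ω => exp (stateForm y F L (s + 1) z b c ω)) μ
  condExp_exp (s : ℤ) (z : ℝ) (b c : Fin k → ℝ) :
    μ[fun ω => exp (stateForm y F L (s + 1) z b c ω)|ℱ s]
      =ᵐ[μ] fun ω => exp (lagAffine F L s (𝒜 z b c) (ℬ z b c) (𝒞 z b c) ω)

namespace IsExpAffine

variable {μ : Measure Ω} {ℱ : Filtration ℤ m0} {F L : ℤ → Ω → Fin k → ℝ} {y : ℤ → Ω → ℝ}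
  {𝒜 : ℝ → (Fin k → ℝ) → (Fin k → ℝ) → ℝ}
  {ℬ : ℝ → (Fin k → ℝ) → (Fin k → ℝ) → Fin p → Fin k → ℝ}
  {𝒞 : ℝ → (Fin k → ℝ) → (Fin k → ℝ) → Fin q → Fin k → ℝ}

lemma stronglyMeasurable_stateForm (h : IsExpAffine μ ℱ F L y 𝒜 ℬ 𝒞) {s r : ℤ} (hsr : s ≤ r)
    (z : ℝ) (b c : Fin k → ℝ) : StronglyMeasurable[ℱ r] (stateForm y F L s z b c) := by
  have hdot : ∀ {G : ℤ → Ω → Fin k → ℝ}, StronglyAdapted ℱ G → ∀ d : Fin k → ℝ,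
      StronglyMeasurable[ℱ r] fun ω => dotk d (G s ω) := fun hG d =>
    (continuous_const.dotProduct continuous_id).comp_stronglyMeasurable ((hG s).mono (ℱ.mono hsr))
  exact ((stronglyMeasurable_const.mul ((h.adapted_y s).mono (ℱ.mono hsr))).add
    (hdot h.adapted_F b)).add (hdot h.adapted_L c)

lemma stronglyMeasurable_lagAffine (h : IsExpAffine μ ℱ F L y 𝒜 ℬ 𝒞) (s : ℤ) (a : ℝ)
    (b : Fin p → Fin k → ℝ) (c : Fin q → Fin k → ℝ) :
    StronglyMeasurable[ℱ s] (lagAffine F L s a b c) := by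
  rw [lagAffine_eq_add_sum_stateForm y]
  exact (stronglyMeasurable_const.add (Finset.stronglyMeasurable_sum _ fun i _ =>
    h.stronglyMeasurable_stateForm (by omega) _ _ _)).add
    (Finset.stronglyMeasurable_sum _ fun j _ => h.stronglyMeasurable_stateForm (by omega) _ _ _)

lemma integrableExpSet_stateForm (h : IsExpAffine μ ℱ F L y 𝒜 ℬ 𝒞) (s : ℤ) (z : ℝ)
    (b c : Fin k → ℝ) : integrableExpSet (stateForm y F L s z b c) μ = Set.univ := by
  refine Set.eq_univ_of_forall fun t => ?_
  have ht := h.integrable_exp (s - 1) (t * z) (t • b) (t • c)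
  rw [sub_add_cancel] at ht
  simpa only [integrableExpSet, Set.mem_ofPred_eq, mul_stateForm] using ht

lemma integrableExpSet_lagAffine [IsFiniteMeasure μ] (h : IsExpAffine μ ℱ F L y 𝒜 ℬ 𝒞) (s : ℤ)
    (a : ℝ) (b : Fin p → Fin k → ℝ) (c : Fin q → Fin k → ℝ) :
    integrableExpSet (lagAffine F L s a b c) μ = Set.univ := by
  rw [lagAffine_eq_add_sum_stateForm y]
  exact integrableExpSet_add_eq_univ (integrableExpSet_add_eq_univ
    (integrableExpSet_const_eq_univ a)
    (integrableExpSet_sum_eq_univ _ fun i _ => h.integrableExpSet_stateForm _ _ _ _))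
    (integrableExpSet_sum_eq_univ _ fun j _ => h.integrableExpSet_stateForm _ _ _ _)

lemma exp_div_condExp_ae_eq (h : IsExpAffine μ ℱ F L y 𝒜 ℬ 𝒞) (ν₁ : Fin k → ℝ) (ν₂ : ℝ)
    (s : ℤ) :
    (fun ω => exp (-dotk ν₁ (F (s + 1) ω) - ν₂ * y (s + 1) ω) /
        (μ[fun ω' => exp (-dotk ν₁ (F (s + 1) ω') - ν₂ * y (s + 1) ω')|ℱ s]) ω)
      =ᵐ[μ] fun ω => exp (stateForm y F L (s + 1) (-ν₂) (-ν₁) 0 ω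
        - lagAffine F L s (𝒜 (-ν₂) (-ν₁) 0) (ℬ (-ν₂) (-ν₁) 0) (𝒞 (-ν₂) (-ν₁) 0) ω) := by
  have hform : ∀ ω, -dotk ν₁ (F (s + 1) ω) - ν₂ * y (s + 1) ω
      = stateForm y F L (s + 1) (-ν₂) (-ν₁) 0 ω := fun ω => by
    simp only [stateForm, dotk_eq_dotProduct, neg_dotProduct, zero_dotProduct]
    ring
  simp only [hform]
  filter_upwards [h.condExp_exp s (-ν₂) (-ν₁) 0] with ω hω
  rw [hω, exp_sub]

lemma condExp_exp_step [IsFiniteMeasure μ] (h : IsExpAffine μ ℱ F L y 𝒜 ℬ 𝒞) (hp : 0 < p)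
    (hq : 0 < q) (z : ℝ) (ν₁ : Fin k → ℝ) (ν₂ : ℝ) (s : ℤ) {a a' : ℝ}
    {b b' : Fin p → Fin k → ℝ} {c c' : Fin q → Fin k → ℝ}
    (ha : a = a' + 𝒜 (z - ν₂) (b' ⟨0, hp⟩ - ν₁) (c' ⟨0, hq⟩) - 𝒜 (-ν₂) (-ν₁) 0)
    (hb : ∀ i, b i = shiftLag b' i + ℬ (z - ν₂) (b' ⟨0, hp⟩ - ν₁) (c' ⟨0, hq⟩) i
      - ℬ (-ν₂) (-ν₁) 0 i)
    (hc : ∀ j, c j = shiftLag c' j + 𝒞 (z - ν₂) (b' ⟨0, hp⟩ - ν₁) (c' ⟨0, hq⟩) j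
      - 𝒞 (-ν₂) (-ν₁) 0 j) :
    μ[fun ω => exp (stateForm y F L (s + 1) (z - ν₂) (-ν₁) 0 ω
        - lagAffine F L s (𝒜 (-ν₂) (-ν₁) 0) (ℬ (-ν₂) (-ν₁) 0) (𝒞 (-ν₂) (-ν₁) 0) ω
        + lagAffine F L (s + 1) a' b' c' ω)|ℱ s]
      =ᵐ[μ] fun ω => exp (lagAffine F L s a b c ω) := by
  set z' := z - ν₂
  set b₀ := b' ⟨0, hp⟩ - ν₁
  set c₀ := c' ⟨0, hq⟩
  -- `ψ` is the `ℱ s`-measurable part of the exponent, `g` the fresh part seen by Assumption 1.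
  set ψ := lagAffine F L s (a - 𝒜 z' b₀ c₀) (b - ℬ z' b₀ c₀) (c - 𝒞 z' b₀ c₀)
  set g := stateForm y F L (s + 1) z' b₀ c₀
  have hψ : lagAffine F L s a b c = ψ + lagAffine F L s (𝒜 z' b₀ c₀) (ℬ z' b₀ c₀) (𝒞 z' b₀ c₀) := by
    simp only [ψ, lagAffine_sub, sub_add_cancel]
  have hψ' : ψ = lagAffine F L s a' (shiftLag b') (shiftLag c')
      - lagAffine F L s (𝒜 (-ν₂) (-ν₁) 0) (ℬ (-ν₂) (-ν₁) 0) (𝒞 (-ν₂) (-ν₁) 0) := by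
    have ha' : a' - 𝒜 (-ν₂) (-ν₁) 0 = a - 𝒜 z' b₀ c₀ := by rw [ha]; ring
    have hb' : shiftLag b' - ℬ (-ν₂) (-ν₁) 0 = b - ℬ z' b₀ c₀ := by
      ext1 i; simp only [Pi.sub_apply, hb i]; abel
    have hc' : shiftLag c' - 𝒞 (-ν₂) (-ν₁) 0 = c - 𝒞 z' b₀ c₀ := by
      ext1 j; simp only [Pi.sub_apply, hc j]; abel
    rw [← lagAffine_sub, ha', hb', hc']
  have hsplit : ∀ ω, stateForm y F L (s + 1) z' (-ν₁) 0 ω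
      - lagAffine F L s (𝒜 (-ν₂) (-ν₁) 0) (ℬ (-ν₂) (-ν₁) 0) (𝒞 (-ν₂) (-ν₁) 0) ω
      + lagAffine F L (s + 1) a' b' c' ω = ψ ω + g ω := by
    intro ω
    rw [hψ', Pi.sub_apply, lagAffine_succ hp hq]
    simp only [g, stateForm, b₀, c₀, dotk_eq_dotProduct, sub_dotProduct, neg_dotProduct,
      zero_dotProduct]
    ring
  have hint : Integrable ((fun ω => exp (ψ ω)) * fun ω => exp (g ω)) μ :=
    (integrable_exp_mul_of_integrableExpSet_eq_univ (integrableExpSet_add_eq_univ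
      (h.integrableExpSet_lagAffine s _ _ _) (h.integrableExpSet_stateForm (s + 1) z' b₀ c₀))
      1).congr (.of_forall fun ω => by simp only [one_mul, Pi.add_apply, exp_add]; rfl)
  calc μ[fun ω => exp (stateForm y F L (s + 1) z' (-ν₁) 0 ω
        - lagAffine F L s (𝒜 (-ν₂) (-ν₁) 0) (ℬ (-ν₂) (-ν₁) 0) (𝒞 (-ν₂) (-ν₁) 0) ω
        + lagAffine F L (s + 1) a' b' c' ω)|ℱ s]
      = μ[(fun ω => exp (ψ ω)) * fun ω => exp (g ω)|ℱ s] := by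
        simp only [hsplit, exp_add]; rfl
    _ =ᵐ[μ] (fun ω => exp (ψ ω)) * μ[fun ω => exp (g ω)|ℱ s] :=
        condExp_mul_of_stronglyMeasurable_left
          (continuous_exp.comp_stronglyMeasurable (h.stronglyMeasurable_lagAffine s _ _ _)) hint
          (h.integrable_exp s z' b₀ c₀)
    _ =ᵐ[μ] (fun ω => exp (ψ ω))
        * fun ω => exp (lagAffine F L s (𝒜 z' b₀ c₀) (ℬ z' b₀ c₀) (𝒞 z' b₀ c₀) ω) :=
        EventuallyEq.rfl.mul (h.condExp_exp s z' b₀ c₀)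
    _ = fun ω => exp (lagAffine F L s a b c ω) := by
        ext ω; simp [hψ, exp_add]

end IsExpAffine

end Model

theorem mgf_risk_neutral_recursion_general
    {Ω : Type*} {m0 : MeasurableSpace Ω} {μ : Measure Ω} [IsProbabilityMeasure μ]
    (ℱ : Filtration ℤ m0) {k p q : ℕ} (hp : 0 < p) (hq : 0 < q)
    (F L : ℤ → Ω → (Fin k → ℝ)) (y : ℤ → Ω → ℝ)
    -- the processes are adapted
    (hFad : ∀ s : ℤ, StronglyMeasurable[ℱ s] (F s))
    (hLad : ∀ s : ℤ, StronglyMeasurable[ℱ s] (L s))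
    (hyad : ∀ s : ℤ, StronglyMeasurable[ℱ s] (y s))
    -- Assumption 1
    (𝒜 : ℝ → (Fin k → ℝ) → (Fin k → ℝ) → ℝ)
    (ℬ : ℝ → (Fin k → ℝ) → (Fin k → ℝ) → Fin p → (Fin k → ℝ))
    (𝒞 : ℝ → (Fin k → ℝ) → (Fin k → ℝ) → Fin q → (Fin k → ℝ))
    (hint : ∀ (s : ℤ) (z : ℝ) (b c : Fin k → ℝ),
      Integrable (fun ω =>
        Real.exp (z * y (s + 1) ω + dotk b (F (s + 1) ω) + dotk c (L (s + 1) ω))) μ)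
    (haff : ∀ (s : ℤ) (z : ℝ) (b c : Fin k → ℝ),
      (μ[fun ω =>
          Real.exp (z * y (s + 1) ω + dotk b (F (s + 1) ω) + dotk c (L (s + 1) ω)) | ℱ s])
        =ᵐ[μ] fun ω => Real.exp (𝒜 z b c
          + ∑ i : Fin p, dotk (ℬ z b c i) (F (s - (i : ℕ)) ω)
          + ∑ j : Fin q, dotk (𝒞 z b c j) (L (s - (j : ℕ)) ω)))
    -- the stochastic discount factor
    (ν₁ : Fin k → ℝ) (ν₂ : ℝ)
    (M : ℤ → Ω → ℝ)
    (hM : ∀ s : ℤ, M s =ᵐ[μ] fun ω =>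
      Real.exp (-dotk ν₁ (F (s + 1) ω) - ν₂ * y (s + 1) ω) /
        (μ[fun ω' => Real.exp (-dotk ν₁ (F (s + 1) ω') - ν₂ * y (s + 1) ω') | ℱ s]) ω)
    -- the starred backward sequences
    (z : ℝ) (t T : ℤ) (htT : t < T)
    (A : ℤ → ℝ) (B : ℤ → Fin p → (Fin k → ℝ)) (C : ℤ → Fin q → (Fin k → ℝ))
    (hAT : A T = 0) (hBT : ∀ i, B T i = 0) (hCT : ∀ j, C T j = 0)
    (hArec : ∀ s : ℤ, t ≤ s → s < T →
      A s = A (s + 1) + 𝒜 (z - ν₂) (B (s + 1) ⟨0, hp⟩ - ν₁) (C (s + 1) ⟨0, hq⟩)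
        - 𝒜 (-ν₂) (-ν₁) 0)
    (hBrec : ∀ (s : ℤ), t ≤ s → s < T → ∀ i : Fin p,
      B s i = (if h : (i : ℕ) + 1 < p then B (s + 1) ⟨(i : ℕ) + 1, h⟩ else 0)
        + ℬ (z - ν₂) (B (s + 1) ⟨0, hp⟩ - ν₁) (C (s + 1) ⟨0, hq⟩) i
        - ℬ (-ν₂) (-ν₁) 0 i)
    (hCrec : ∀ (s : ℤ), t ≤ s → s < T → ∀ j : Fin q,
      C s j = (if h : (j : ℕ) + 1 < q then C (s + 1) ⟨(j : ℕ) + 1, h⟩ else 0)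
        + 𝒞 (z - ν₂) (B (s + 1) ⟨0, hp⟩ - ν₁) (C (s + 1) ⟨0, hq⟩) j
        - 𝒞 (-ν₂) (-ν₁) 0 j) :
    (μ[fun ω => (∏ s ∈ Finset.Ico t T, M s ω) *
        Real.exp (z * ∑ u ∈ Finset.Icc (t + 1) T, y u ω) | ℱ t])
      =ᵐ[μ] fun ω => Real.exp (A t
        + ∑ i : Fin p, dotk (B t i) (F (t - (i : ℕ)) ω)
        + ∑ j : Fin q, dotk (C t j) (L (t - (j : ℕ)) ω)) := by
  have h : IsExpAffine μ ℱ F L y 𝒜 ℬ 𝒞 := ⟨hFad, hLad, hyad, hint, haff⟩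
  set X : ℤ → Ω → ℝ := fun s ω => stateForm y F L (s + 1) (z - ν₂) (-ν₁) 0 ω
    - lagAffine F L s (𝒜 (-ν₂) (-ν₁) 0) (ℬ (-ν₂) (-ν₁) 0) (𝒞 (-ν₂) (-ν₁) 0) ω with hX
  have hprod : (fun ω => (∏ s ∈ Finset.Ico t T, M s ω) *
      Real.exp (z * ∑ u ∈ Finset.Icc (t + 1) T, y u ω))
        =ᵐ[μ] fun ω => exp (∑ s ∈ Ico t T, X s ω) := by
    filter_upwards [(eventually_all_finset (Ico t T)).2 fun s _ =>
      (hM s).trans (h.exp_div_condExp_ae_eq ν₁ ν₂ s)] with ω hω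
    rw [prod_congr rfl hω, ← exp_sum, ← Ico_add_one_right_eq_Icc, ← sum_Ico_add', mul_sum,
      ← exp_add, ← sum_add_distrib]
    refine congrArg exp (sum_congr rfl fun s _ => ?_)
    simp only [hX, stateForm]
    ring
  refine (condExp_congr_ae hprod).trans (condExp_exp_sum_Ico_of_step
    (Φ := fun s => lagAffine F L s (A s) (B s) (C s)) htT.le (fun s => ?_)
    (fun s => ?_) ?_ fun s hts hsT => h.condExp_exp_step hp hq z ν₁ ν₂ s
      (hArec s hts hsT) (hBrec s hts hsT) (hCrec s hts hsT))
  · exact (h.stronglyMeasurable_stateForm le_rfl _ _ _).sub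
      ((h.stronglyMeasurable_lagAffine s _ _ _).mono (ℱ.mono (by omega)))
  · have hXu : ∀ u, integrableExpSet (X u) μ = Set.univ := fun u =>
      integrableExpSet_sub_eq_univ (h.integrableExpSet_stateForm _ _ _ _)
        (h.integrableExpSet_lagAffine u _ _ _)
    simpa using integrable_exp_mul_of_integrableExpSet_eq_univ
      (integrableExpSet_sum_eq_univ (Ico s T) fun u _ => hXu u) 1
  · rw [hAT, funext hBT, funext hCT]
    exact lagAffine_zero T

/-- Under Assumption 1 and the exponential-affine stochastic discount factor
`M_{s,s+1} = exp(−ν₁·F_{s+1} − ν₂ y_{s+1}) / 𝔼[exp(−ν₁·F_{s+1} − ν₂ y_{s+1}) | ℱ_s]`, the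
risk-neutral moment generating function of the aggregated log-return is exponentially affine
in the past factors and leverages, with starred backward-recursion coefficients. -/
theorem mgf_risk_neutral_recursion
    {Ω : Type*} {m0 : MeasurableSpace Ω} {μ : Measure Ω} [IsProbabilityMeasure μ]
    (ℱ : Filtration ℤ m0) {k p q : ℕ} (hp : 0 < p) (hq : 0 < q)
    (F L : ℤ → Ω → (Fin k → ℝ)) (y : ℤ → Ω → ℝ)
    -- the processes are adapted
    (hFad : ∀ s : ℤ, StronglyMeasurable[ℱ s] (F s))
    (hLad : ∀ s : ℤ, StronglyMeasurable[ℱ s] (L s))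
    (hyad : ∀ s : ℤ, StronglyMeasurable[ℱ s] (y s))
    -- Assumption 1
    (𝒜 : ℝ → (Fin k → ℝ) → (Fin k → ℝ) → ℝ)
    (ℬ : ℝ → (Fin k → ℝ) → (Fin k → ℝ) → Fin p → (Fin k → ℝ))
    (𝒞 : ℝ → (Fin k → ℝ) → (Fin k → ℝ) → Fin q → (Fin k → ℝ))
    (hint : ∀ (s : ℤ) (z : ℝ) (b c : Fin k → ℝ),
      Integrable (fun ω =>
        Real.exp (z * y (s + 1) ω + dotk b (F (s + 1) ω) + dotk c (L (s + 1) ω))) μ)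
    (haff : ∀ (s : ℤ) (z : ℝ) (b c : Fin k → ℝ),
      (μ[fun ω =>
          Real.exp (z * y (s + 1) ω + dotk b (F (s + 1) ω) + dotk c (L (s + 1) ω)) | ℱ s])
        =ᵐ[μ] fun ω => Real.exp (𝒜 z b c
          + ∑ i : Fin p, dotk (ℬ z b c i) (F (s - (i : ℕ)) ω)
          + ∑ j : Fin q, dotk (𝒞 z b c j) (L (s - (j : ℕ)) ω)))
    (h𝒜0 : 𝒜 0 0 0 = 0) (hℬ0 : ∀ i, ℬ 0 0 0 i = 0) (h𝒞0 : ∀ j, 𝒞 0 0 0 j = 0)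
    -- the stochastic discount factor
    (ν₁ : Fin k → ℝ) (ν₂ : ℝ)
    (M : ℤ → Ω → ℝ)
    (hM : ∀ s : ℤ, M s =ᵐ[μ] fun ω =>
      Real.exp (-dotk ν₁ (F (s + 1) ω) - ν₂ * y (s + 1) ω) /
        (μ[fun ω' => Real.exp (-dotk ν₁ (F (s + 1) ω') - ν₂ * y (s + 1) ω') | ℱ s]) ω)
    -- the starred backward sequences
    (z : ℝ) (t T : ℤ) (htT : t < T)
    (A : ℤ → ℝ) (B : ℤ → Fin p → (Fin k → ℝ)) (C : ℤ → Fin q → (Fin k → ℝ))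
    (hAT : A T = 0) (hBT : ∀ i, B T i = 0) (hCT : ∀ j, C T j = 0)
    (hArec : ∀ s : ℤ, t ≤ s → s < T →
      A s = A (s + 1) + 𝒜 (z - ν₂) (B (s + 1) ⟨0, hp⟩ - ν₁) (C (s + 1) ⟨0, hq⟩)
        - 𝒜 (-ν₂) (-ν₁) 0)
    (hBrec : ∀ (s : ℤ), t ≤ s → s < T → ∀ i : Fin p,
      B s i = (if h : (i : ℕ) + 1 < p then B (s + 1) ⟨(i : ℕ) + 1, h⟩ else 0)
        + ℬ (z - ν₂) (B (s + 1) ⟨0, hp⟩ - ν₁) (C (s + 1) ⟨0, hq⟩) i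
        - ℬ (-ν₂) (-ν₁) 0 i)
    (hCrec : ∀ (s : ℤ), t ≤ s → s < T → ∀ j : Fin q,
      C s j = (if h : (j : ℕ) + 1 < q then C (s + 1) ⟨(j : ℕ) + 1, h⟩ else 0)
        + 𝒞 (z - ν₂) (B (s + 1) ⟨0, hp⟩ - ν₁) (C (s + 1) ⟨0, hq⟩) j
        - 𝒞 (-ν₂) (-ν₁) 0 j) :
    (μ[fun ω => (∏ s ∈ Finset.Ico t T, M s ω) *
        Real.exp (z * ∑ u ∈ Finset.Icc (t + 1) T, y u ω) | ℱ t])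
      =ᵐ[μ] fun ω => Real.exp (A t
        + ∑ i : Fin p, dotk (B t i) (F (t - (i : ℕ)) ω)
        + ∑ j : Fin q, dotk (C t j) (L (t - (j : ℕ)) ω)) :=
  mgf_risk_neutral_recursion_general ℱ hp hq F L y hFad hLad hyad 𝒜 ℬ 𝒞 hint haff ν₁ ν₂ M hM z t T
    htT A B C hAT hBT hCT hArec hBrec hCrec
end

section
/- Let δ > 0, Θ ≥ 0, θ > 0, λ, γ, r ∈ ℝ, and consider on ℝ × ℝ the product measure μ = γ̄(δ, Θ, θ) ⊗ N(0,1) with coordinates (R, ε). Set y = r + λ R + √R ε, ℓ = (ε − γ√R)², and M = exp(−ν₁ R − ν₂ y) / ∫ exp(−ν₁ R − ν₂ y) dμ for ν₁, ν₂ ∈ ℝ. For all z, b, c ∈ ℝ with c < 1/2, θ x(z−ν₂, b−ν₁, c) < 1 and θ x(−ν₂, −ν₁, 0) < 1, one has ∫ M exp(z y + b R + c ℓ) dμ = exp(z r − (1/2) ln(1 − 2c) − δ [w(x(z−ν₂, b−ν₁, c), θ) − w(x(−ν₂, −ν₁, 0), θ)] + [v(x(z−ν₂, b−ν₁, c), θ)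 − v(x(−ν₂, −ν₁, 0), θ)] Θ), where x(z, b, c) = zλ + b + ((1/2) z² + γ² c − 2 c γ z)/(1 − 2c). -/
open MeasureTheory ProbabilityTheory Real

/-- The noncentral gamma distribution `γ̄(δ, c, θ)` with shape `δ > 0`, noncentrality `c ≥ 0`
and scale `θ > 0`: the Poisson mixture `∑ₖ (e^{−c} cᵏ / k!) • Γ(δ + k, θ)`, where `Γ(a, θ)`
is the gamma distribution with shape `a` and rate `1/θ`. -/
noncomputable def ncGamma (δ c θ : ℝ) : Measure ℝ :=
  Measure.sum fun k : ℕ =>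
    ENNReal.ofReal (Real.exp (-c) * c ^ k / Nat.factorial k) • gammaMeasure (δ + k) θ⁻¹

/-- `v(x, θ) = θx/(1 − θx)`. -/
noncomputable def vfun (x θ : ℝ) : ℝ := θ * x / (1 - θ * x)

/-- `w(x, θ) = ln(1 − θx)`. -/
noncomputable def wfun (x θ : ℝ) : ℝ := Real.log (1 - θ * x)

/-- `x(z, b, c) = zλ + b + ((1/2)z² + γ²c − 2cγz)/(1 − 2c)`. -/
noncomputable def xfun (lam γ z b c : ℝ) : ℝ :=
  z * lam + b + ((1 / 2) * z ^ 2 + γ ^ 2 * c - 2 * c * γ * z) / (1 - 2 * c)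

/-!
Conditionally on `R`, the exponent is a quadratic in `ε`, so the Gaussian integral leaves
`exp (z r + x(z, b, c) R) / √(1 − 2c)`. The Laplace transform of `γ̄(δ, Θ, θ)`, computed term by
term from the Poisson mixture, turns `exp (x R)` into `exp (−δ w(x, θ) + v(x, θ) Θ)`. The
risk-neutral expectation is the ratio of two such physical moment generating functions.
-/

lemma quadratic_eq_complete_square {a : ℝ} (ha : a ≠ 0) (b c x : ℝ) :
    a * x ^ 2 + b * x + c = a * (x + b / (2 * a)) ^ 2 + (c - b ^ 2 / (4 * a)) := by
  field_simp
  ring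

lemma integrable_exp_quadratic {a : ℝ} (ha : a < 0) (b c : ℝ) :
    Integrable fun x : ℝ => exp (a * x ^ 2 + b * x + c) := by
  have hgauss : Integrable fun x : ℝ => exp (a * x ^ 2) := by
    simpa using integrable_exp_neg_mul_sq (neg_pos.2 ha)
  simp_rw [quadratic_eq_complete_square ha.ne, exp_add]
  exact (hgauss.comp_add_right _).mul_const _

lemma integral_exp_quadratic {a : ℝ} (ha : a < 0) (b c : ℝ) :
    ∫ x : ℝ, exp (a * x ^ 2 + b * x + c) = √(π / -a) * exp (c - b ^ 2 / (4 * a)) := by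
  have hgauss : ∫ x : ℝ, exp (a * x ^ 2) = √(π / -a) := by simpa using integral_gaussian (-a)
  simp_rw [quadratic_eq_complete_square ha.ne, exp_add, integral_mul_const,
    integral_add_right_eq_self (fun x => exp (a * x ^ 2)), hgauss]

lemma lintegral_exp_quadratic_gaussianReal {a : ℝ} (ha : a < 1 / 2) (b c : ℝ) :
    ∫⁻ x, ENNReal.ofReal (exp (a * x ^ 2 + b * x + c)) ∂gaussianReal 0 1
      = ENNReal.ofReal (exp (c + b ^ 2 / (2 * (1 - 2 * a))) / √(1 - 2 * a)) := by
  have ha' : a - 1 / 2 < 0 := by linarith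
  have hdensity : ∀ x : ℝ, gaussianPDF 0 1 x * ENNReal.ofReal (exp (a * x ^ 2 + b * x + c))
      = ENNReal.ofReal ((√(2 * π))⁻¹ * exp ((a - 1 / 2) * x ^ 2 + b * x + c)) := fun x => by
    rw [gaussianPDF, ← ENNReal.ofReal_mul (gaussianPDFReal_nonneg 0 1 x), gaussianPDFReal,
      mul_assoc, ← exp_add]
    congr 3 <;> simp
    ring
  rw [gaussianReal_of_var_ne_zero _ one_ne_zero,
    lintegral_withDensity_eq_lintegral_mul₀ (by fun_prop) (by fun_prop)]
  simp only [Pi.mul_apply, hdensity]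
  rw [← ofReal_integral_eq_lintegral_ofReal ((integrable_exp_quadratic ha' b c).const_mul _)
    (ae_of_all _ fun x => by positivity), integral_const_mul, integral_exp_quadratic ha']
  have h2a : 0 < 1 - 2 * a := by linarith
  rw [show -(a - 1 / 2) = (1 - 2 * a) / 2 by ring, div_div_eq_mul_div,
    show 4 * (a - 1 / 2) = -(2 * (1 - 2 * a)) by ring, sqrt_div (by positivity), div_neg,
    sub_neg_eq_add]
  field_simp

lemma gammaPDF_mul_exp {a ρ t : ℝ} (hρ : 0 < ρ) (ht : t < ρ) (x : ℝ) :
    gammaPDF a ρ x * ENNReal.ofReal (exp (t * x))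
      = ENNReal.ofReal ((ρ / (ρ - t)) ^ a) * gammaPDF a (ρ - t) x := by
  have hρt : 0 < ρ - t := sub_pos.2 ht
  rcases lt_or_ge x 0 with hx | hx
  · simp [gammaPDF_of_neg hx]
  rw [gammaPDF_of_nonneg hx, gammaPDF_of_nonneg hx, ← ENNReal.ofReal_mul' (exp_pos _).le,
    ← ENNReal.ofReal_mul (by positivity), div_rpow hρ.le hρt.le]
  congr 1
  rw [show -(ρ * x) = -((ρ - t) * x) - t * x by ring, exp_sub]
  field_simp

lemma lintegral_exp_mul_gammaMeasure {a ρ t : ℝ} (ha : 0 < a) (hρ : 0 < ρ) (ht : t < ρ) :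
    ∫⁻ x, ENNReal.ofReal (exp (t * x)) ∂gammaMeasure a ρ
      = ENNReal.ofReal ((ρ / (ρ - t)) ^ a) := by
  rw [gammaMeasure, lintegral_withDensity_eq_lintegral_mul₀
    (by exact (measurable_gammaPDFReal a ρ).ennreal_ofReal.aemeasurable) (by fun_prop)]
  simp only [Pi.mul_apply, gammaPDF_mul_exp hρ ht]
  rw [lintegral_const_mul' _ _ ENNReal.ofReal_ne_top,
    lintegral_gammaPDF_eq_one ha (sub_pos.2 ht), mul_one]

lemma ae_nonneg_ncGamma (δ Θ θ : ℝ) : ∀ᵐ x ∂ncGamma δ Θ θ, 0 ≤ x := by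
  rw [ncGamma, Measure.ae_sum_iff]
  intro k
  refine Measure.ae_smul_measure ?_ _
  rw [gammaMeasure,
    ae_withDensity_iff' (by exact (measurable_gammaPDFReal _ _).ennreal_ofReal.aemeasurable)]
  exact ae_of_all _ fun x hx => not_lt.1 fun hneg => hx (gammaPDF_of_neg hneg)

lemma lintegral_exp_mul_ncGamma {δ Θ θ t : ℝ} (hδ : 0 < δ) (hΘ : 0 ≤ Θ) (hθ : 0 < θ)
    (ht : θ * t < 1) :
    ∫⁻ x, ENNReal.ofReal (exp (t * x)) ∂ncGamma δ Θ θ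
      = ENNReal.ofReal (exp (-δ * wfun t θ + vfun t θ * Θ)) := by
  have hu : 0 < 1 - θ * t := by linarith
  have hrate : t < θ⁻¹ := by rw [← one_div, lt_div_iff₀ hθ]; linarith
  have hratio : θ⁻¹ / (θ⁻¹ - t) = (1 - θ * t)⁻¹ := by field_simp
  set q := (1 - θ * t)⁻¹ with hq_def
  have hq : 0 < q := inv_pos.2 hu
  have hterm : ∀ k : ℕ,
      ENNReal.ofReal (exp (-Θ) * Θ ^ k / k.factorial) * ENNReal.ofReal (q ^ (δ + k))
      = ENNReal.ofReal (exp (-Θ) * q ^ δ * ((Θ * q) ^ k / k.factorial)) := fun k => by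
    rw [← ENNReal.ofReal_mul (by positivity), rpow_add hq, rpow_natCast]
    congr 1
    ring
  have hexp_series : HasSum (fun k : ℕ => (Θ * q) ^ k / k.factorial) (exp (Θ * q)) := by
    rw [exp_eq_exp_ℝ]
    exact NormedSpace.expSeries_div_hasSum_exp _
  simp_rw [ncGamma, lintegral_sum_measure, lintegral_smul_measure,
    lintegral_exp_mul_gammaMeasure (add_pos_of_pos_of_nonneg hδ (Nat.cast_nonneg _))
      (inv_pos.2 hθ) hrate, hratio, smul_eq_mul, hterm]
  rw [← ENNReal.ofReal_tsum_of_nonneg (fun k => by positivity)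
      ((Real.summable_pow_div_factorial _).mul_left _), tsum_mul_left,
    hexp_series.tsum_eq, rpow_def_of_pos hq, ← exp_add, ← exp_add, hq_def, log_inv, wfun, vfun]
  congr 2
  field_simp
  ring

lemma xfun_eq_add_sq_div {c : ℝ} (hc : 1 - 2 * c ≠ 0) (lam γ z b : ℝ) :
    xfun lam γ z b c = z * lam + b + c * γ ^ 2 + (z - 2 * c * γ) ^ 2 / (2 * (1 - 2 * c)) := by
  rw [xfun]
  field_simp
  ring

lemma lintegral_exp_lharg_gaussianReal {R c : ℝ} (hR : 0 ≤ R) (hc : c < 1 / 2)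
    (lam γ r z b : ℝ) :
    ∫⁻ ε, ENNReal.ofReal (exp (z * (r + lam * R + √R * ε) + b * R + c * (ε - γ * √R) ^ 2))
        ∂gaussianReal 0 1
      = ENNReal.ofReal (exp (z * r) / √(1 - 2 * c) * exp (xfun lam γ z b c * R)) := by
  have hsq : √R ^ 2 = R := sq_sqrt hR
  have hexpand : ∀ ε : ℝ, z * (r + lam * R + √R * ε) + b * R + c * (ε - γ * √R) ^ 2
      = c * ε ^ 2 + (z - 2 * c * γ) * √R * ε + (z * r + (z * lam + b + c * γ ^ 2) * R) :=
    fun ε => by linear_combination c * γ ^ 2 * hsq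
  simp_rw [hexpand, lintegral_exp_quadratic_gaussianReal hc, mul_pow, hsq,
    xfun_eq_add_sq_div (by linarith : 1 - 2 * c ≠ 0), div_mul_eq_mul_div, ← exp_add]
  congr 3
  ring

theorem lharg_one_step_mgf {δ Θ θ c : ℝ} (hδ : 0 < δ) (hΘ : 0 ≤ Θ) (hθ : 0 < θ)
    (hc : c < 1 / 2) {lam γ z b : ℝ} (hx : θ * xfun lam γ z b c < 1) (r : ℝ) :
    ∫ pt, exp (z * (r + lam * pt.1 + √pt.1 * pt.2) + b * pt.1 + c * (pt.2 - γ * √pt.1) ^ 2)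
        ∂(ncGamma δ Θ θ).prod (gaussianReal 0 1)
      = exp (z * r - (1 / 2) * log (1 - 2 * c) - δ * wfun (xfun lam γ z b c) θ
          + vfun (xfun lam γ z b c) θ * Θ) := by
  have h2c : 0 < 1 - 2 * c := by linarith
  rw [integral_eq_lintegral_of_nonneg_ae (ae_of_all _ fun _ => (exp_pos _).le) (by fun_prop),
    lintegral_prod _ (by fun_prop)]
  rw [lintegral_congr_ae ((ae_nonneg_ncGamma δ Θ θ).mono fun R hR =>
      lintegral_exp_lharg_gaussianReal hR hc lam γ r z b)]
  simp_rw [ENNReal.ofReal_mul (by positivity : 0 ≤ exp (z * r) / √(1 - 2 * c))]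
  rw [lintegral_const_mul _ (by fun_prop), lintegral_exp_mul_ncGamma hδ hΘ hθ hx,
    ← ENNReal.ofReal_mul (by positivity), ENNReal.toReal_ofReal (by positivity),
    sqrt_eq_rpow, rpow_def_of_pos h2c, div_eq_mul_inv, ← exp_neg, ← exp_add, ← exp_add]
  congr 1
  ring

/-- One-step risk-neutral moment generating function of the LHARG model:
on `μ = γ̄(δ, Θ, θ) ⊗ N(0,1)` with coordinates `(R, ε)`, `y = r + λR + √R ε`,
`ℓ = (ε − γ√R)²`, `M = exp(−ν₁R − ν₂y)/∫ exp(−ν₁R − ν₂y) dμ`, for `c < 1/2`,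
`θ x(z−ν₂, b−ν₁, c) < 1` and `θ x(−ν₂, −ν₁, 0) < 1`,
`∫ M exp(zy + bR + cℓ) dμ = exp(zr − (1/2)ln(1 − 2c)
  − δ[w(x(z−ν₂,b−ν₁,c),θ) − w(x(−ν₂,−ν₁,0),θ)]
  + [v(x(z−ν₂,b−ν₁,c),θ) − v(x(−ν₂,−ν₁,0),θ)] Θ)`. -/
theorem lharg_one_step_risk_neutral_mgf (δ Θ θ lam γ r ν₁ ν₂ : ℝ)
    (hδ : 0 < δ) (hΘ : 0 ≤ Θ) (hθ : 0 < θ) (z b c : ℝ)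
    (hc : c < 1 / 2)
    (hx1 : θ * xfun lam γ (z - ν₂) (b - ν₁) c < 1)
    (hx0 : θ * xfun lam γ (-ν₂) (-ν₁) 0 < 1) :
    let μ : Measure (ℝ × ℝ) := (ncGamma δ Θ θ).prod (gaussianReal 0 1)
    let y : ℝ × ℝ → ℝ := fun pt => r + lam * pt.1 + Real.sqrt pt.1 * pt.2
    let ℓ : ℝ × ℝ → ℝ := fun pt => (pt.2 - γ * Real.sqrt pt.1) ^ 2
    let M : ℝ × ℝ → ℝ := fun pt =>
      Real.exp (-ν₁ * pt.1 - ν₂ * y pt) / ∫ pt', Real.exp (-ν₁ * pt'.1 - ν₂ * y pt') ∂μ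
    ∫ pt, M pt * Real.exp (z * y pt + b * pt.1 + c * ℓ pt) ∂μ =
      Real.exp (z * r - (1 / 2) * Real.log (1 - 2 * c) -
        δ * (wfun (xfun lam γ (z - ν₂) (b - ν₁) c) θ - wfun (xfun lam γ (-ν₂) (-ν₁) 0) θ) +
        (vfun (xfun lam γ (z - ν₂) (b - ν₁) c) θ - vfun (xfun lam γ (-ν₂) (-ν₁) 0) θ) * Θ) := by
  intro μ y ℓ M
  have hnormalizer : ∀ pt : ℝ × ℝ, exp (-ν₁ * pt.1 - ν₂ * y pt)
      = exp (-ν₂ * y pt + -ν₁ * pt.1 + 0 * ℓ pt) := fun pt => by congr 1; ring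
  have htilted : ∀ pt : ℝ × ℝ, M pt * exp (z * y pt + b * pt.1 + c * ℓ pt)
      = exp ((z - ν₂) * y pt + (b - ν₁) * pt.1 + c * ℓ pt)
        / ∫ pt', exp (-ν₁ * pt'.1 - ν₂ * y pt') ∂μ :=
    fun pt => by rw [div_mul_eq_mul_div, ← exp_add]; congr 2; ring
  simp only [htilted, hnormalizer, integral_div]
  rw [lharg_one_step_mgf hδ hΘ hθ hc hx1, lharg_one_step_mgf hδ hΘ hθ (by norm_num) hx0,
    ← exp_sub, mul_zero, sub_zero, log_one]
  congr 1
  ring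
end
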